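/- Let m ≥ 3 be an integer and C a real number. For each t ∈ {−1, (m²−2m)/(m²+4)}, the function β : ℝ^{m+1} → ℝ given by β(x₁,…,x_m,z) = (Σᵢ₌₁^m xᵢ + z + C)^t satisfies, at every point of the region {Σᵢ₌₁^m xᵢ + z + C > 0}, the equation Σᵢ₌₁^m (β·∂ᵢ∂ᵢβ − m·(∂ᵢβ)²) + m·(β·∂_z∂_zβ − 2·(∂_zβ)²) + ((m−2)/(2·∂_zβ))·Σᵢ₌₁^m (β²·∂ᵢ∂ᵢ∂_zβ − (m−2)·β·∂ᵢβ·∂ᵢ∂_zβ) + ((m−2)(m−4)/(4·(∂_zβ)²))·Σᵢ₌₁^m β²·(∂ᵢ∂_zβ)² = 0. -/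

import Mathlib

/-!
On the half-space `S = Σᵢ xᵢ + z + C > 0`, every partial derivative of `S ^ t` is the derivative in
`S`, so `β`, its first, second and third partial derivatives are `S^t`, `t S^(t-1)`,
`t(t-1) S^(t-2)` and `t(t-1)(t-2) S^(t-3)` whatever the directions. Substituting, the left side
of (pc1) collapses to `-(m/4) · Q(t) · S^(2t-2)` with `Q(t) = (m²+4)t² + (2m+4)t + 2m - m²`, and
the two exponents are exactly the roots of `Q`.
-/

open Topology

/-- The partial derivative of `f : ℝⁿ → ℝ` in the `i`-th coordinate direction. -/
noncomputable def pd {n : ℕ} (i : Fin n) (f : (Fin n → ℝ) → ℝ) : (Fin n → ℝ) → ℝ :=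
  fun x => deriv (fun s : ℝ => f (Function.update x i s)) (x i)

lemma sum_update_eq_sub_add {n : ℕ} (x : Fin n → ℝ) (i : Fin n) (s : ℝ) :
    ∑ j, Function.update x i s j = ∑ j, x j - x i + s := by
  rw [Finset.sum_update_of_mem (Finset.mem_univ i), Finset.sum_sdiff_eq_sub (Finset.subset_univ _),
    Finset.sum_singleton]
  ring

lemma pd_eq_of_eq_const_mul_rpow_sum {n : ℕ} {C k a : ℝ} {f : (Fin n → ℝ) → ℝ}
    (hf : ∀ x, 0 < ∑ j, x j + C → f x = k * (∑ j, x j + C) ^ a) (i : Fin n) :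
    ∀ x, 0 < ∑ j, x j + C → pd i f x = k * a * (∑ j, x j + C) ^ (a - 1) := by
  intro x hx
  let c := ∑ j, x j + C - x i
  have hsum : ∀ s, ∑ j, Function.update x i s j + C = s + c := fun s => by
    rw [sum_update_eq_sub_add]; ring
  have hline : (fun s => f (Function.update x i s)) =ᶠ[𝓝 (x i)] fun s => k * (s + c) ^ a := by
    filter_upwards [Ioi_mem_nhds (show -c < x i by linarith)] with s hs
    rw [hf _ (by rw [hsum]; linarith [Set.mem_Ioi.mp hs]), hsum]
  have hderiv : HasDerivAt (fun s => k * (s + c) ^ a) (k * (a * (x i + c) ^ (a - 1) * 1)) (x i) :=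
    ((Real.hasDerivAt_rpow_const (Or.inl (by simp only [id, c]; linarith))).comp (x i)
      ((hasDerivAt_id (x i)).add_const c)).const_mul k
  rw [pd, hline.deriv_eq, hderiv.deriv, show x i + c = ∑ j, x j + C by ring]
  ring

section RpowSum

variable {n : ℕ} {C t : ℝ} {f : (Fin n → ℝ) → ℝ}
  (hf : ∀ x, 0 < ∑ j, x j + C → f x = (∑ j, x j + C) ^ t)
include hf

lemma pd_of_eq_rpow_sum (i : Fin n) :
    ∀ x, 0 < ∑ j, x j + C → pd i f x = t * (∑ j, x j + C) ^ (t - 1) := by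
  simpa using pd_eq_of_eq_const_mul_rpow_sum (k := 1) (by simpa using hf) i

lemma pd_pd_of_eq_rpow_sum (i j : Fin n) :
    ∀ x, 0 < ∑ j, x j + C → pd i (pd j f) x = t * (t - 1) * (∑ j, x j + C) ^ (t - 2) := by
  simpa [sub_sub, one_add_one_eq_two] using
    pd_eq_of_eq_const_mul_rpow_sum (pd_of_eq_rpow_sum hf j) i

lemma pd_pd_pd_of_eq_rpow_sum (i j k : Fin n) :
    ∀ x, 0 < ∑ j, x j + C →
      pd i (pd j (pd k f)) x = t * (t - 1) * (t - 2) * (∑ j, x j + C) ^ (t - 3) := by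
  have := pd_eq_of_eq_const_mul_rpow_sum (pd_pd_of_eq_rpow_sum hf j k) i
  intro x hx
  rw [this x hx]; norm_num [sub_sub]

end RpowSum

lemma pc1_rpow_eq (m : ℝ) {s t : ℝ} (hs : 0 < s) (ht : t ≠ 0) :
    m * (s ^ t * (t * (t - 1) * s ^ (t - 2)) - m * (t * s ^ (t - 1)) ^ 2)
      + m * (s ^ t * (t * (t - 1) * s ^ (t - 2)) - 2 * (t * s ^ (t - 1)) ^ 2)
      + (m - 2) / (2 * (t * s ^ (t - 1))) *
          (m * ((s ^ t) ^ 2 * (t * (t - 1) * (t - 2) * s ^ (t - 3))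
            - (m - 2) * s ^ t * (t * s ^ (t - 1)) * (t * (t - 1) * s ^ (t - 2))))
      + (m - 2) * (m - 4) / (4 * (t * s ^ (t - 1)) ^ 2) *
          (m * ((s ^ t) ^ 2 * (t * (t - 1) * s ^ (t - 2)) ^ 2))
      = -(m / 4) * ((m ^ 2 + 4) * t ^ 2 + (2 * m + 4) * t + (2 * m - m ^ 2)) *
          (s ^ (t - 1)) ^ 2 := by
  -- Every term is homogeneous of degree `2t - 2` in `s`; factoring out `s ^ (t - 3)` leaves a
  -- polynomial identity.
  have hpow : ∀ k : ℕ, s ^ (t - 3 + k) = s ^ (t - 3) * s ^ k := fun k => by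
    rw [Real.rpow_add hs, Real.rpow_natCast]
  obtain ⟨w, hw, hw0⟩ : ∃ w, s ^ (t - 3) = w ∧ 0 < w := ⟨_, rfl, Real.rpow_pos_of_pos hs _⟩
  have h0 : s ^ t = w * s ^ 3 := by rw [← hw, ← hpow]; norm_num
  have h1 : s ^ (t - 1) = w * s ^ 2 := by rw [← hw, ← hpow]; congr 1; push_cast; ring
  have h2 : s ^ (t - 2) = w * s ^ 1 := by rw [← hw, ← hpow]; congr 1; push_cast; ring
  rw [h0, h1, h2, hw]
  field_simp
  ring

lemma pc1_quadratic_eq_zero {m t : ℝ} (ht : t = -1 ∨ t = (m ^ 2 - 2 * m) / (m ^ 2 + 4)) :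
    (m ^ 2 + 4) * t ^ 2 + (2 * m + 4) * t + (2 * m - m ^ 2) = 0 := by
  rcases ht with rfl | rfl
  · ring
  · field_simp
    ring

theorem stmt6_general (m : ℕ) (C : ℝ) (t : ℝ)
    (ht : t = -1 ∨ t = ((m : ℝ) ^ 2 - 2 * (m : ℝ)) / ((m : ℝ) ^ 2 + 4))
    (β : (Fin (m + 1) → ℝ) → ℝ)
    (hβ : ∀ x : Fin (m + 1) → ℝ,
      0 < (∑ i : Fin m, x i.castSucc) + x (Fin.last m) + C →
      β x = ((∑ i : Fin m, x i.castSucc) + x (Fin.last m) + C) ^ t) :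
    ∀ x : Fin (m + 1) → ℝ,
      0 < (∑ i : Fin m, x i.castSucc) + x (Fin.last m) + C →
      (∑ i : Fin m,
          (β x * pd i.castSucc (pd i.castSucc β) x - (m : ℝ) * (pd i.castSucc β x) ^ 2))
        + (m : ℝ) *
            (β x * pd (Fin.last m) (pd (Fin.last m) β) x - 2 * (pd (Fin.last m) β x) ^ 2)
        + (((m : ℝ) - 2) / (2 * pd (Fin.last m) β x)) *
            (∑ i : Fin m,
              ((β x) ^ 2 * pd i.castSucc (pd i.castSucc (pd (Fin.last m) β)) x
                - ((m : ℝ) - 2) * β x * pd i.castSucc β x *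
                    pd i.castSucc (pd (Fin.last m) β) x))
        + (((m : ℝ) - 2) * ((m : ℝ) - 4) / (4 * (pd (Fin.last m) β x) ^ 2)) *
            (∑ i : Fin m, (β x) ^ 2 * (pd i.castSucc (pd (Fin.last m) β) x) ^ 2)
      = 0 := by
  simp only [← Fin.sum_univ_castSucc] at hβ ⊢
  intro x hx
  simp only [hβ x hx, pd_of_eq_rpow_sum hβ _ x hx, pd_pd_of_eq_rpow_sum hβ _ _ x hx,
    pd_pd_pd_of_eq_rpow_sum hβ _ _ _ x hx, Finset.sum_const, Finset.card_univ,
    Fintype.card_fin, nsmul_eq_mul]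
  rcases eq_or_ne t 0 with rfl | ht0
  · -- `β` is constant; the coefficients `1 / ∂_zβ` are junk `1 / 0 = 0`.
    simp
  · rw [pc1_rpow_eq _ hx ht0, pc1_quadratic_eq_zero ht]
    ring

/-- Let `m ≥ 3` be an integer and `C` real. For each
`t ∈ {−1, (m²−2m)/(m²+4)}`, the function `β(x₁,…,x_m,z) = (Σᵢ xᵢ + z + C)^t`
satisfies the PDE (pc1) at every point of the region `{Σᵢ xᵢ + z + C > 0}`. -/
theorem stmt6 (m : ℕ) (hm : 3 ≤ m) (C : ℝ) (t : ℝ)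
    (ht : t = -1 ∨ t = ((m : ℝ) ^ 2 - 2 * (m : ℝ)) / ((m : ℝ) ^ 2 + 4))
    (β : (Fin (m + 1) → ℝ) → ℝ)
    (hβ : ∀ x : Fin (m + 1) → ℝ,
      0 < (∑ i : Fin m, x i.castSucc) + x (Fin.last m) + C →
      β x = ((∑ i : Fin m, x i.castSucc) + x (Fin.last m) + C) ^ t) :
    ∀ x : Fin (m + 1) → ℝ,
      0 < (∑ i : Fin m, x i.castSucc) + x (Fin.last m) + C →
      (∑ i : Fin m,
          (β x * pd i.castSucc (pd i.castSucc β) x - (m : ℝ) * (pd i.castSucc β x) ^ 2))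
        + (m : ℝ) *
            (β x * pd (Fin.last m) (pd (Fin.last m) β) x - 2 * (pd (Fin.last m) β x) ^ 2)
        + (((m : ℝ) - 2) / (2 * pd (Fin.last m) β x)) *
            (∑ i : Fin m,
              ((β x) ^ 2 * pd i.castSucc (pd i.castSucc (pd (Fin.last m) β)) x
                - ((m : ℝ) - 2) * β x * pd i.castSucc β x *
                    pd i.castSucc (pd (Fin.last m) β) x))
        + (((m : ℝ) - 2) * ((m : ℝ) - 4) / (4 * (pd (Fin.last m) β x) ^ 2)) *
            (∑ i : Fin m, (β x) ^ 2 * (pd i.castSucc (pd (Fin.last m) β) x) ^ 2)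
      = 0 :=
  stmt6_general m C t ht β hβ
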